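/- Let H be a complex Hilbert space, A a positive bounded linear operator on H, T an A-bounded operator on H, and x ∈ H with ‖x‖_A ≠ 0. Then T maps x^{⊥_A} into (Tx)^{⊥_A} if and only if either [T maps x^{A+} into (Tx)^{A+} and T maps x^{A-} into (Tx)^{A-}], or [T maps x^{A+} into (Tx)^{A-} and T maps x^{A-} into (Tx)^{A+}]. -/

import Mathlib

open ContinuousLinearMap

variable {H : Type*}

/-- The semi-norm induced by the positive operator `A`: `‖x‖_A = √(re ⟪A x, x⟫)`. -/
noncomputable def seminormA [NormedAddCommGroup H] [InnerProductSpace ℂ H]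
    (A : H →L[ℂ] H) (x : H) : ℝ :=
  Real.sqrt ((inner ℂ (A x) x : ℂ)).re

/-- The semi-inner product induced by `A`: `⟨x, y⟩_A = ⟪A x, y⟫`. -/
noncomputable def ipA [NormedAddCommGroup H] [InnerProductSpace ℂ H]
    (A : H →L[ℂ] H) (x y : H) : ℂ :=
  inner ℂ (A x) y

/-- `U = {α ∈ ℂ : |α| = 1, arg α ∈ [0, π)}`. -/
def Uset : Set ℂ := {α : ℂ | ‖α‖ = 1 ∧ 0 ≤ α.arg ∧ α.arg < Real.pi}

/-- `(x)_α^{A+}`. -/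
def plusSetAlpha [NormedAddCommGroup H] [InnerProductSpace ℂ H]
    (A : H →L[ℂ] H) (α : ℂ) (x : H) : Set H :=
  {y | ∀ t : ℝ, 0 ≤ t → seminormA A x ≤ seminormA A (x + ((t : ℂ) * α) • y)}

/-- `(x)_α^{A-}`. -/
def minusSetAlpha [NormedAddCommGroup H] [InnerProductSpace ℂ H]
    (A : H →L[ℂ] H) (α : ℂ) (x : H) : Set H :=
  {y | ∀ t : ℝ, t ≤ 0 → seminormA A x ≤ seminormA A (x + ((t : ℂ) * α) • y)}

/-- `x^{⊥_α^A}`. -/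
def perpSetAlpha [NormedAddCommGroup H] [InnerProductSpace ℂ H]
    (A : H →L[ℂ] H) (α : ℂ) (x : H) : Set H :=
  {y | ∀ t : ℝ, seminormA A x ≤ seminormA A (x + ((t : ℂ) * α) • y)}

/-- `x^{A+} = ⋂_{α ∈ U} (x)_α^{A+}`. -/
def plusSetA [NormedAddCommGroup H] [InnerProductSpace ℂ H]
    (A : H →L[ℂ] H) (x : H) : Set H :=
  ⋂ α ∈ Uset, plusSetAlpha A α x

/-- `x^{A-} = ⋂_{α ∈ U} (x)_α^{A-}`. -/
def minusSetA [NormedAddCommGroup H] [InnerProductSpace ℂ H]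
    (A : H →L[ℂ] H) (x : H) : Set H :=
  ⋂ α ∈ Uset, minusSetAlpha A α x

/-- `x^{⊥_A} = ⋂_{α ∈ U} x^{⊥_α^A}`. -/
def perpSetA [NormedAddCommGroup H] [InnerProductSpace ℂ H]
    (A : H →L[ℂ] H) (x : H) : Set H :=
  ⋂ α ∈ Uset, perpSetAlpha A α x

section Aux

variable [NormedAddCommGroup H] [InnerProductSpace ℂ H] [CompleteSpace H]

lemma reA_nonneg {A : H →L[ℂ] H} (hA : A.IsPositive) (z : H) :
    0 ≤ (inner ℂ (A z) z : ℂ).re := by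
  have := hA.2 z
  simpa [ContinuousLinearMap.reApplyInnerSelf_apply, RCLike.re_to_complex] using this

lemma innerA_symm {A : H →L[ℂ] H} (hA : A.IsPositive) (u v : H) :
    (inner ℂ (A u) v : ℂ) = inner ℂ u (A v) := by
  exact_mod_cast hA.1 u v

lemma imA_zero {A : H →L[ℂ] H} (hA : A.IsPositive) (z : H) :
    (inner ℂ (A z) z : ℂ).im = 0 := by
  have h : (starRingEnd ℂ) (inner ℂ (A z) z : ℂ) = (inner ℂ (A z) z : ℂ) := by
    nth_rewrite 1 [innerA_symm hA z z]
    exact inner_conj_symm _ _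
  have := congrArg Complex.im h
  simp only [Complex.conj_im] at this
  linarith

lemma expand_inner {A : H →L[ℂ] H} (hA : A.IsPositive) (x y : H) (s : ℂ) :
    (inner ℂ (A (x + s • y)) (x + s • y) : ℂ)
      = inner ℂ (A x) x + s * inner ℂ (A x) y
        + (starRingEnd ℂ) (s * (inner ℂ (A x) y : ℂ)) + s * (starRingEnd ℂ) s * inner ℂ (A y) y := by
  have h1 : (inner ℂ (A y) x : ℂ) = (starRingEnd ℂ) (inner ℂ (A x) y : ℂ) := by
    rw [innerA_symm hA y x, ← inner_conj_symm]
  simp only [map_add, map_smul, inner_add_left, inner_add_right, inner_smul_left,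
    inner_smul_right, h1, map_mul]
  ring

lemma expand_re {A : H →L[ℂ] H} (hA : A.IsPositive) (x y : H) (t : ℝ) (α : ℂ)
    (hα : ‖α‖ = 1) :
    (inner ℂ (A (x + ((t : ℂ) * α) • y)) (x + ((t : ℂ) * α) • y) : ℂ).re
      = (inner ℂ (A x) x : ℂ).re + 2 * t * (α * inner ℂ (A x) y).re
        + t ^ 2 * (inner ℂ (A y) y : ℂ).re := by
  have h2 : ((t : ℂ) * α) * (starRingEnd ℂ) ((t : ℂ) * α) = ((t ^ 2 : ℝ) : ℂ) := by
    rw [Complex.mul_conj]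
    have : Complex.normSq ((t : ℂ) * α) = t ^ 2 := by
      rw [Complex.normSq_mul, ← Complex.sq_norm α, hα]
      simp [Complex.normSq_ofReal, sq]
    rw [this]
  rw [expand_inner hA x y ((t : ℂ) * α), h2]
  simp only [Complex.add_re, Complex.conj_re, Complex.mul_re, Complex.ofReal_re,
    Complex.ofReal_im, Complex.mul_im]
  ring

lemma seminorm_le_iff {A : H →L[ℂ] H} (hA : A.IsPositive) (x w : H) :
    seminormA A x ≤ seminormA A w ↔ (inner ℂ (A x) x : ℂ).re ≤ (inner ℂ (A w) w : ℂ).re := by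
  unfold seminormA
  exact Real.sqrt_le_sqrt_iff (reA_nonneg hA w)

lemma key_ineq {r q : ℝ} (hq : 0 ≤ q) (hr : r ≠ 0) :
    2 * (-r / (q + 1)) * r + (-r / (q + 1)) ^ 2 * q < 0 := by
  have hq1 : (0:ℝ) < q + 1 := by linarith
  have key : 2 * (-r / (q + 1)) * r + (-r / (q + 1)) ^ 2 * q
      = -(r ^ 2 * (q + 2)) / ((q + 1) ^ 2) := by
    field_simp
    ring
  rw [key]
  have h1 : 0 < r ^ 2 * (q + 2) := by positivity
  have h2 : 0 < (q + 1) ^ 2 := by positivity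
  exact div_neg_of_neg_of_pos (by linarith) h2

lemma mem_plusSetAlpha_iff {A : H →L[ℂ] H} (hA : A.IsPositive) {α : ℂ}
    (hα : ‖α‖ = 1) (x y : H) :
    y ∈ plusSetAlpha A α x ↔ 0 ≤ (α * inner ℂ (A x) y).re := by
  simp only [plusSetAlpha, Set.mem_setOf_eq, seminorm_le_iff hA, expand_re hA x y _ α hα]
  set r := (α * (inner ℂ (A x) y : ℂ)).re
  set q := (inner ℂ (A y) y : ℂ).re with hqdef
  have hq : 0 ≤ q := reA_nonneg hA y
  constructor
  · intro h
    by_contra hr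
    push_neg at hr
    set t := -r / (q + 1) with htdef
    have ht : 0 ≤ t := by
      apply div_nonneg (by linarith) (by linarith)
    have := h t ht
    have hk := key_ineq hq (ne_of_lt hr)
    rw [← htdef] at hk
    linarith
  · intro hr t ht
    nlinarith [mul_nonneg ht hr, mul_nonneg (mul_nonneg ht ht) hq]

lemma mem_minusSetAlpha_iff {A : H →L[ℂ] H} (hA : A.IsPositive) {α : ℂ}
    (hα : ‖α‖ = 1) (x y : H) :
    y ∈ minusSetAlpha A α x ↔ (α * inner ℂ (A x) y).re ≤ 0 := by
  simp only [minusSetAlpha, Set.mem_setOf_eq, seminorm_le_iff hA, expand_re hA x y _ α hα]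
  set r := (α * (inner ℂ (A x) y : ℂ)).re
  set q := (inner ℂ (A y) y : ℂ).re with hqdef
  have hq : 0 ≤ q := reA_nonneg hA y
  constructor
  · intro h
    by_contra hr
    push_neg at hr
    set t := -r / (q + 1) with htdef
    have ht : t ≤ 0 := by
      apply div_nonpos_of_nonpos_of_nonneg (by linarith) (by linarith)
    have := h t ht
    have hk := key_ineq hq (ne_of_gt hr)
    rw [← htdef] at hk
    linarith
  · intro hr t ht
    nlinarith [mul_nonneg (neg_nonneg.mpr ht) (neg_nonneg.mpr hr),
      mul_nonneg (sq_nonneg t) hq]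

lemma mem_perpSetAlpha_iff' {A : H →L[ℂ] H} (α : ℂ) (x y : H) :
    y ∈ perpSetAlpha A α x ↔ y ∈ plusSetAlpha A α x ∧ y ∈ minusSetAlpha A α x := by
  constructor
  · intro h
    exact ⟨fun t _ => h t, fun t _ => h t⟩
  · rintro ⟨h1, h2⟩ t
    rcases le_total 0 t with ht | ht
    · exact h1 t ht
    · exact h2 t ht

/-- The core real analysis lemma. -/
lemma core_lemma (a b : ℝ)
    (h : ∀ θ : ℝ, 0 ≤ θ → θ < Real.pi → 0 ≤ Real.cos θ * a - Real.sin θ * b) :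
    a = 0 ∧ b ≤ 0 := by
  have hπ : (0:ℝ) < Real.pi := Real.pi_pos
  have hπ3 : (3:ℝ) < Real.pi := Real.pi_gt_three
  have ha0 : 0 ≤ a := by have := h 0 le_rfl hπ; simpa using this
  have hb : b ≤ 0 := by
    have := h (Real.pi / 2) (by linarith) (by linarith)
    simpa [Real.cos_pi_div_two, Real.sin_pi_div_two] using this
  refine ⟨le_antisymm ?_ ha0, hb⟩
  by_contra hc
  push_neg at hc
  set ε := Real.cos 1 with hεdef
  have hε0 : 0 < ε := Real.cos_one_pos
  have hb1 : (0:ℝ) < -b + 1 := by linarith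
  set δ := min 1 (ε * a / (2 * (-b + 1))) with hδdef
  have hδ0 : 0 < δ := lt_min one_pos (by positivity)
  have hδ1 : δ ≤ 1 := min_le_left _ _
  have hδ2 : δ ≤ ε * a / (2 * (-b + 1)) := min_le_right _ _
  have h1 := h (Real.pi - δ) (by linarith) (by linarith)
  rw [Real.cos_pi_sub, Real.sin_pi_sub] at h1
  have hcos : ε ≤ Real.cos δ :=
    Real.cos_le_cos_of_nonneg_of_le_pi hδ0.le (by linarith) hδ1
  have hsin1 : Real.sin δ ≤ δ := Real.sin_le hδ0.le
  have hsin0 : 0 ≤ Real.sin δ := Real.sin_nonneg_of_nonneg_of_le_pi hδ0.le (by linarith)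
  have k1 : Real.sin δ * (-b) ≤ δ * (-b) := mul_le_mul_of_nonneg_right hsin1 (by linarith)
  have k2 : δ * (-b) ≤ (ε * a / (2 * (-b + 1))) * (-b) :=
    mul_le_mul_of_nonneg_right hδ2 (by linarith)
  have k3 : (ε * a / (2 * (-b + 1))) * (-b) < ε * a := by
    rw [div_mul_eq_mul_div, div_lt_iff₀ (by positivity)]
    nlinarith [mul_pos hε0 hc, mul_nonneg (mul_pos hε0 hc).le (neg_nonneg.2 hb)]
  have k4 : ε * a ≤ Real.cos δ * a := mul_le_mul_of_nonneg_right hcos hc.le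
  nlinarith

lemma mem_Uset_of_angle {θ : ℝ} (h0 : 0 ≤ θ) (h1 : θ < Real.pi) :
    ((Real.cos θ : ℂ) + (Real.sin θ : ℂ) * Complex.I) ∈ Uset := by
  have hπ : (0:ℝ) < Real.pi := Real.pi_pos
  have habs : ‖(Real.cos θ : ℂ) + (Real.sin θ : ℂ) * Complex.I‖ = 1 := by
    rw [Complex.ofReal_cos, Complex.ofReal_sin]
    exact Complex.norm_cos_add_sin_mul_I θ
  have harg : ((Real.cos θ : ℂ) + (Real.sin θ : ℂ) * Complex.I).arg = θ := by
    rw [Complex.ofReal_cos, Complex.ofReal_sin]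
    exact Complex.arg_cos_add_sin_mul_I ⟨by linarith, by linarith⟩
  exact ⟨habs, by rw [harg]; exact h0, by rw [harg]; exact h1⟩

lemma angle_mul_re {θ : ℝ} (c : ℂ) :
    (((Real.cos θ : ℂ) + (Real.sin θ : ℂ) * Complex.I) * c).re
      = Real.cos θ * c.re - Real.sin θ * c.im := by
  simp [Complex.mul_re, Complex.add_re, Complex.add_im, Complex.mul_im,
    Complex.cos_ofReal_re, Complex.sin_ofReal_re]

lemma mem_plusSetA_iff {A : H →L[ℂ] H} (hA : A.IsPositive) (x y : H) :
    y ∈ plusSetA A x ↔ (inner ℂ (A x) y : ℂ).re = 0 ∧ (inner ℂ (A x) y : ℂ).im ≤ 0 := by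
  set c := (inner ℂ (A x) y : ℂ) with hcdef
  simp only [plusSetA, Set.mem_iInter]
  constructor
  · intro h
    apply core_lemma
    intro θ h0 h1
    have hm := mem_Uset_of_angle h0 h1
    have := (mem_plusSetAlpha_iff hA hm.1 x y).mp (h _ hm)
    rwa [angle_mul_re] at this
  · rintro ⟨h1, h2⟩ α hm
    rw [mem_plusSetAlpha_iff hA hm.1 x y]
    have him : 0 ≤ α.im := Complex.arg_nonneg_iff.mp hm.2.1
    simp only [Complex.mul_re, ← hcdef, h1, mul_zero, zero_sub]
    nlinarith
  
lemma mem_minusSetA_iff {A : H →L[ℂ] H} (hA : A.IsPositive) (x y : H) :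
    y ∈ minusSetA A x ↔ (inner ℂ (A x) y : ℂ).re = 0 ∧ 0 ≤ (inner ℂ (A x) y : ℂ).im := by
  set c := (inner ℂ (A x) y : ℂ) with hcdef
  simp only [minusSetA, Set.mem_iInter]
  constructor
  · intro h
    have key : ∀ θ : ℝ, 0 ≤ θ → θ < Real.pi →
        0 ≤ Real.cos θ * (-c.re) - Real.sin θ * (-c.im) := by
      intro θ h0 h1
      have hm := mem_Uset_of_angle h0 h1
      have := (mem_minusSetAlpha_iff hA hm.1 x y).mp (h _ hm)
      rw [angle_mul_re] at this
      linarith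
    obtain ⟨e1, e2⟩ := core_lemma _ _ key
    constructor <;> linarith
  · rintro ⟨h1, h2⟩ α hm
    rw [mem_minusSetAlpha_iff hA hm.1 x y]
    have him : 0 ≤ α.im := Complex.arg_nonneg_iff.mp hm.2.1
    simp only [Complex.mul_re, ← hcdef, h1, mul_zero, zero_sub]
    nlinarith

lemma mem_perpSetA_iff {A : H →L[ℂ] H} (hA : A.IsPositive) (x y : H) :
    y ∈ perpSetA A x ↔ (inner ℂ (A x) y : ℂ) = 0 := by
  have hsplit : y ∈ perpSetA A x ↔ y ∈ plusSetA A x ∧ y ∈ minusSetA A x := by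
    simp only [perpSetA, plusSetA, minusSetA, Set.mem_iInter, mem_perpSetAlpha_iff']
    constructor
    · intro h
      exact ⟨fun α hm => (h α hm).1, fun α hm => (h α hm).2⟩
    · rintro ⟨h1, h2⟩ α hm
      exact ⟨h1 α hm, h2 α hm⟩
  rw [hsplit, mem_plusSetA_iff hA, mem_minusSetA_iff hA, Complex.ext_iff]
  constructor
  · rintro ⟨⟨a1, a2⟩, _, b2⟩
    exact ⟨a1, by simpa using le_antisymm a2 b2⟩
  · rintro ⟨a1, a2⟩
    exact ⟨⟨a1, le_of_eq a2⟩, a1, ge_of_eq a2⟩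

end Aux

theorem statement14 [NormedAddCommGroup H] [InnerProductSpace ℂ H] [CompleteSpace H]
    (A T : H →L[ℂ] H) (hA : A.IsPositive)
    (hT : ∃ c : ℝ, 0 < c ∧ ∀ z : H, seminormA A (T z) ≤ c * seminormA A z)
    (x : H) (hx : seminormA A x ≠ 0) :
    (∀ y ∈ perpSetA A x, T y ∈ perpSetA A (T x)) ↔
      (((∀ y ∈ plusSetA A x, T y ∈ plusSetA A (T x)) ∧
        (∀ y ∈ minusSetA A x, T y ∈ minusSetA A (T x))) ∨
       ((∀ y ∈ plusSetA A x, T y ∈ minusSetA A (T x)) ∧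
        (∀ y ∈ minusSetA A x, T y ∈ plusSetA A (T x)))) := by
  simp only [mem_perpSetA_iff hA, mem_plusSetA_iff hA, mem_minusSetA_iff hA]
  have hnre : 0 < (inner ℂ (A x) x : ℂ).re := by
    have := Real.sqrt_ne_zero'.mp hx
    exact this
  have hn : (inner ℂ (A x) x : ℂ) ≠ 0 := by
    intro h
    rw [h] at hnre
    simp at hnre
  constructor
  · intro hperp
    -- show ψ(y) = μ φ(y) with μ ≥ 0 real
    set n := (inner ℂ (A x) x : ℂ) with hndef
    set m := (inner ℂ (A (T x)) (T x) : ℂ) with hmdef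
    have hmain : ∀ y : H, (inner ℂ (A (T x)) (T y) : ℂ)
        = ((m.re / n.re : ℝ) : ℂ) * (inner ℂ (A x) y : ℂ) := by
      intro y
      set μ := (inner ℂ (A x) y : ℂ) / n with hμdef
      have h0 : (inner ℂ (A x) (y - μ • x) : ℂ) = 0 := by
        rw [inner_sub_right, inner_smul_right, hμdef]
        field_simp
        simp [hndef]
      have h1 := hperp (y - μ • x) h0
      rw [map_sub, map_smul, inner_sub_right, inner_smul_right, sub_eq_zero] at h1
      have hmre : m = ((m.re : ℝ) : ℂ) := by
        rw [Complex.ext_iff]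
        exact ⟨by simp, by simpa using imA_zero hA (T x)⟩
      have hnre' : n = ((n.re : ℝ) : ℂ) := by
        rw [Complex.ext_iff]
        exact ⟨by simp, by simpa using imA_zero hA x⟩
      rw [h1, hμdef, Complex.ofReal_div, ← hmre, ← hnre']
      field_simp
      ring
    have hμ0 : 0 ≤ m.re / n.re := div_nonneg (reA_nonneg hA (T x)) hnre.le
    left
    constructor
    · intro y hy
      rw [hmain y]
      constructor
      · simp [hy.1, Complex.mul_re, Complex.ofReal_re, Complex.ofReal_im]
      · simp only [Complex.mul_im, Complex.ofReal_re, Complex.ofReal_im, zero_mul, add_zero]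
        exact mul_nonpos_of_nonneg_of_nonpos hμ0 hy.2
    · intro y hy
      rw [hmain y]
      constructor
      · simp [hy.1, Complex.mul_re, Complex.ofReal_re, Complex.ofReal_im]
      · simp only [Complex.mul_im, Complex.ofReal_re, Complex.ofReal_im, zero_mul, add_zero]
        exact mul_nonneg hμ0 hy.2
  · intro hrhs y hy
    have hyp : (inner ℂ (A x) y : ℂ).re = 0 ∧ (inner ℂ (A x) y : ℂ).im ≤ 0 := by
      rw [hy]; simp
    have hym : (inner ℂ (A x) y : ℂ).re = 0 ∧ 0 ≤ (inner ℂ (A x) y : ℂ).im := by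
      rw [hy]; simp
    rcases hrhs with ⟨h1, h2⟩ | ⟨h1, h2⟩
    · obtain ⟨a1, a2⟩ := h1 y hyp
      obtain ⟨b1, b2⟩ := h2 y hym
      exact Complex.ext a1 (le_antisymm a2 b2)
    · obtain ⟨a1, a2⟩ := h1 y hyp
      obtain ⟨b1, b2⟩ := h2 y hym
      exact Complex.ext a1 (le_antisymm b2 a2)
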